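/- arXiv:1301.2240 — 5 statements merged into one kernel-verified Lean document; each statement's English description precedes it below -/
import Mathlib

section
/- Fix σ ∈ {1, -1}, set τ = e^{-πiσ/3}, and let ε₁ ∈ {0, 1/2}. Then β₊ = e^{(2πi/3)(2ε₁ + σ)} is the unique complex number satisfying β₊³ = 1, β₊·conj(β₊) = 1, e^{(4πi/3)ε₁}·β₊·(conj(τ) - 1) = conj(β₊), and -e^{(4πi/3)ε₁}·β₊ = conj(β₊)·conj(τ). -/
open Complex

/-- The conditions on the coefficient β₊ of the ℤ₃-equivariant action. -/
def z3BetaCond (ε₁ : ℝ) (τ β : ℂ) : Prop :=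
  β ^ 3 = 1 ∧ β * (starRingEnd ℂ) β = 1 ∧
    Complex.exp (4 * Real.pi * Complex.I / 3 * ε₁) * β * ((starRingEnd ℂ) τ - 1)
      = (starRingEnd ℂ) β ∧
    -(Complex.exp (4 * Real.pi * Complex.I / 3 * ε₁) * β)
      = (starRingEnd ℂ) β * (starRingEnd ℂ) τ

theorem z3_beta_unique (σ : ℝ) (hσ : σ = 1 ∨ σ = -1)
    (ε₁ : ℝ) (hε : ε₁ = 0 ∨ ε₁ = 1/2)
    (τ : ℂ) (hτ : τ = Complex.exp (-(Real.pi * Complex.I * σ) / 3)) :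
    z3BetaCond ε₁ τ (Complex.exp (2 * Real.pi * Complex.I / 3 * (2 * ε₁ + σ))) ∧
    ∀ β : ℂ, z3BetaCond ε₁ τ β →
      β = Complex.exp (2 * Real.pi * Complex.I / 3 * (2 * ε₁ + σ)) := by
  subst hτ
  set w := Complex.exp (Real.pi * Complex.I / 3) with hw
  have hw3 : w ^ 3 = -1 := by
    rw [hw, ← Complex.exp_nat_mul,
      show ((3:ℕ):ℂ) * (Real.pi * Complex.I / 3) = Real.pi * Complex.I by push_cast; ring]
    exact Complex.exp_pi_mul_I
  have him : w.im = Real.sin (Real.pi / 3) := by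
    rw [hw, show (Real.pi : ℂ) * Complex.I / 3 = ((Real.pi/3 : ℝ) : ℂ) * Complex.I by
      push_cast; ring, Complex.exp_ofReal_mul_I_im]
  have hne : w + 1 ≠ 0 := by
    intro h
    have h1 : w = -1 := by linear_combination h
    have : Real.sin (Real.pi / 3) = 0 := by rw [← him, h1]; simp
    rw [Real.sin_pi_div_three] at this
    nlinarith [Real.sq_sqrt (by norm_num : (3:ℝ) ≥ 0), Real.sqrt_nonneg 3]
  have hw2 : w ^ 2 = w - 1 := by
    have h1 : (w + 1) * (w ^ 2 - w + 1) = 0 := by linear_combination hw3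
    rcases mul_eq_zero.mp h1 with h | h
    · exact absurd h hne
    · linear_combination h
  have hcw : (starRingEnd ℂ) w = -w ^ 2 := by
    have hm : w * (starRingEnd ℂ) w = 1 := by
      rw [hw, ← Complex.exp_conj, ← Complex.exp_add,
        show (Real.pi : ℂ) * Complex.I / 3 + (starRingEnd ℂ) (Real.pi * Complex.I / 3) = 0 by
          simp [map_div₀, Complex.conj_I, map_ofNat]; ring]
      exact Complex.exp_zero
    linear_combination (-w^2) * hm + ((starRingEnd ℂ) w) * hw3
  have hexpneg : Complex.exp (-(Real.pi * Complex.I / 3)) = -w^2 := by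
    have hx : Complex.exp (-(Real.pi * Complex.I / 3)) * w = 1 := by
      rw [hw, ← Complex.exp_add]; simp
    linear_combination (-w^2) * hx + Complex.exp (-(Real.pi * Complex.I / 3)) * hw3
  rcases hσ with rfl | rfl <;> rcases hε with rfl | rfl
  · -- σ = 1, ε₁ = 0
    have he : Complex.exp (4 * (Real.pi:ℂ) * Complex.I / 3 * ((0:ℝ):ℂ)) = 1 := by
      rw [show 4 * (Real.pi:ℂ) * Complex.I / 3 * ((0:ℝ):ℂ) = 0 by push_cast; ring]
      exact Complex.exp_zero
    have ht : Complex.exp (-((Real.pi:ℂ) * Complex.I * ((1:ℝ):ℂ)) / 3) = -w^2 := by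
      rw [show -((Real.pi:ℂ) * Complex.I * ((1:ℝ):ℂ)) / 3 = -(Real.pi * Complex.I / 3) by
        push_cast; ring]
      exact hexpneg
    have hct : (starRingEnd ℂ) (Complex.exp (-((Real.pi:ℂ) * Complex.I * ((1:ℝ):ℂ)) / 3)) = w := by
      rw [ht, map_neg, map_pow, hcw]
      linear_combination (-w) * hw3
    have hv : Complex.exp (2 * (Real.pi:ℂ) * Complex.I / 3 * (2 * ((0:ℝ):ℂ) + ((1:ℝ):ℂ))) = w ^ 2 := by
      rw [show 2 * (Real.pi:ℂ) * Complex.I / 3 * (2 * ((0:ℝ):ℂ) + ((1:ℝ):ℂ))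
          = ((2:ℕ):ℂ) * (Real.pi * Complex.I / 3) by push_cast; ring,
        Complex.exp_nat_mul, ← hw]
    rw [hv]
    constructor
    · refine ⟨?_, ?_, ?_, ?_⟩
      · linear_combination (w^3 - 1) * hw3
      · rw [map_pow, hcw]; linear_combination (w^3 - 1) * hw3
      · rw [he, hct, map_pow, hcw]; linear_combination (1 - w) * hw3 - hw2
      · rw [he, hct, map_pow, hcw]; linear_combination (-w^2) * hw3
    · rintro β ⟨h1, h2, h3, h4⟩
      rw [he, hct] at h4
      have hb2 : β ^ 2 = -w := by linear_combination (-β) * h4 + (-w) * h2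
      linear_combination (β^2 - w) * hb2 - β * h1
  · -- σ = 1, ε₁ = 1/2
    have he : Complex.exp (4 * (Real.pi:ℂ) * Complex.I / 3 * ((1/2:ℝ):ℂ)) = w ^ 2 := by
      rw [show 4 * (Real.pi:ℂ) * Complex.I / 3 * ((1/2:ℝ):ℂ)
          = ((2:ℕ):ℂ) * (Real.pi * Complex.I / 3) by push_cast; ring,
        Complex.exp_nat_mul, ← hw]
    have ht : Complex.exp (-((Real.pi:ℂ) * Complex.I * ((1:ℝ):ℂ)) / 3) = -w^2 := by
      rw [show -((Real.pi:ℂ) * Complex.I * ((1:ℝ):ℂ)) / 3 = -(Real.pi * Complex.I / 3) by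
        push_cast; ring]
      exact hexpneg
    have hct : (starRingEnd ℂ) (Complex.exp (-((Real.pi:ℂ) * Complex.I * ((1:ℝ):ℂ)) / 3)) = w := by
      rw [ht, map_neg, map_pow, hcw]
      linear_combination (-w) * hw3
    have hv : Complex.exp (2 * (Real.pi:ℂ) * Complex.I / 3 * (2 * ((1/2:ℝ):ℂ) + ((1:ℝ):ℂ))) = w ^ 4 := by
      rw [show 2 * (Real.pi:ℂ) * Complex.I / 3 * (2 * ((1/2:ℝ):ℂ) + ((1:ℝ):ℂ))
          = ((4:ℕ):ℂ) * (Real.pi * Complex.I / 3) by push_cast; ring,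
        Complex.exp_nat_mul, ← hw]
    rw [hv]
    constructor
    · refine ⟨?_, ?_, ?_, ?_⟩
      · linear_combination (w^9 - w^6 + w^3 - 1) * hw3
      · rw [map_pow, hcw]; linear_combination (w^9 - w^6 + w^3 - 1) * hw3
      · rw [he, hct, map_pow, hcw]
        linear_combination (-w^5 + w^4 - w^3 + w^2 - w + 1) * hw3 - hw2
      · rw [he, hct, map_pow, hcw]; linear_combination (-w^6) * hw3
    · rintro β ⟨h1, h2, h3, h4⟩
      rw [he, hct] at h4
      have hb2 : w^2 * β ^ 2 = -w := by linear_combination (-β) * h4 + (-w) * h2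
      have hb2' : β ^ 2 = w ^ 2 := by linear_combination β^2 * hw3 - w * hb2
      linear_combination (β^2 + w^2) * hb2' - β * h1
  · -- σ = -1, ε₁ = 0
    have he : Complex.exp (4 * (Real.pi:ℂ) * Complex.I / 3 * ((0:ℝ):ℂ)) = 1 := by
      rw [show 4 * (Real.pi:ℂ) * Complex.I / 3 * ((0:ℝ):ℂ) = 0 by push_cast; ring]
      exact Complex.exp_zero
    have hct : (starRingEnd ℂ) (Complex.exp (-((Real.pi:ℂ) * Complex.I * ((-1:ℝ):ℂ)) / 3)) = -w^2 := by
      rw [show -((Real.pi:ℂ) * Complex.I * ((-1:ℝ):ℂ)) / 3 = Real.pi * Complex.I / 3 by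
        push_cast; ring, ← hw, hcw]
    have hv : Complex.exp (2 * (Real.pi:ℂ) * Complex.I / 3 * (2 * ((0:ℝ):ℂ) + ((-1:ℝ):ℂ))) = -w := by
      rw [show 2 * (Real.pi:ℂ) * Complex.I / 3 * (2 * ((0:ℝ):ℂ) + ((-1:ℝ):ℂ))
          = ((2:ℕ):ℂ) * (-(Real.pi * Complex.I / 3)) by push_cast; ring,
        Complex.exp_nat_mul, hexpneg]
      linear_combination w * hw3
    rw [hv]
    constructor
    · refine ⟨?_, ?_, ?_, ?_⟩
      · linear_combination -hw3
      · rw [map_neg, hcw]; linear_combination -hw3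
      · rw [he, hct, map_neg, hcw]; linear_combination hw3 - hw2
      · rw [he, hct, map_neg, hcw]; linear_combination w * hw3
    · rintro β ⟨h1, h2, h3, h4⟩
      rw [he, hct] at h4
      have hb2 : β ^ 2 = w ^ 2 := by linear_combination (-β) * h4 + (w^2) * h2
      linear_combination (β^2 + w^2) * hb2 - β * h1 + w * hw3
  · -- σ = -1, ε₁ = 1/2
    have he : Complex.exp (4 * (Real.pi:ℂ) * Complex.I / 3 * ((1/2:ℝ):ℂ)) = w ^ 2 := by
      rw [show 4 * (Real.pi:ℂ) * Complex.I / 3 * ((1/2:ℝ):ℂ)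
          = ((2:ℕ):ℂ) * (Real.pi * Complex.I / 3) by push_cast; ring,
        Complex.exp_nat_mul, ← hw]
    have hct : (starRingEnd ℂ) (Complex.exp (-((Real.pi:ℂ) * Complex.I * ((-1:ℝ):ℂ)) / 3)) = -w^2 := by
      rw [show -((Real.pi:ℂ) * Complex.I * ((-1:ℝ):ℂ)) / 3 = Real.pi * Complex.I / 3 by
        push_cast; ring, ← hw, hcw]
    have hv : Complex.exp (2 * (Real.pi:ℂ) * Complex.I / 3 * (2 * ((1/2:ℝ):ℂ) + ((-1:ℝ):ℂ))) = 1 := by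
      rw [show 2 * (Real.pi:ℂ) * Complex.I / 3 * (2 * ((1/2:ℝ):ℂ) + ((-1:ℝ):ℂ)) = 0 by
        push_cast; ring]
      exact Complex.exp_zero
    rw [hv]
    constructor
    · refine ⟨?_, ?_, ?_, ?_⟩
      · norm_num
      · simp
      · rw [he, hct, map_one]; linear_combination (-w) * hw3 - hw2
      · rw [he, hct, map_one]; ring
    · rintro β ⟨h1, h2, h3, h4⟩
      rw [he, hct] at h4
      have hb2 : w^2 * β ^ 2 = w^2 := by linear_combination (-β) * h4 + (w^2) * h2
      have hb2' : β ^ 2 = 1 := by linear_combination (β^2 - 1) * hw3 - w * hb2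
      linear_combination (β^2 + 1) * hb2' - β * h1
end

section
/- Let σ ∈ {1, -1}, τ = σ·i, and ε₁ ∈ {0, 1/2}. If β₊ ∈ ℂ satisfies β₊⁴ = 1 and e^{πi·ε₁}·β₊ = -conj(τ)·conj(β₊), then ε₁ = 1/2 and β₊ = ±e^{(πi/4)(σ-1)}. -/
open Complex

lemma roots4 (β : ℂ) (h4 : β ^ 4 = 1) : β = 1 ∨ β = -1 ∨ β = I ∨ β = -I := by
  have h : (β - 1) * (β + 1) * (β - I) * (β + I) = 0 := by
    linear_combination h4 + (1 - β ^ 2) * I_sq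
  rcases mul_eq_zero.1 h with h | h
  · rcases mul_eq_zero.1 h with h | h
    · rcases mul_eq_zero.1 h with h | h
      · exact Or.inl (sub_eq_zero.1 h)
      · exact Or.inr (Or.inl (by linear_combination h))
    · exact Or.inr (Or.inr (Or.inl (sub_eq_zero.1 h)))
  · exact Or.inr (Or.inr (Or.inr (by linear_combination h)))

lemma exp_half : Complex.exp (Real.pi * Complex.I * ((1/2:ℝ):ℂ)) = I := by
  have : (Real.pi : ℂ) * I * ((1/2:ℝ):ℂ) = (↑(Real.pi/2) : ℂ) * I := by
    push_cast; ring
  rw [this, Complex.exp_mul_I, ← Complex.ofReal_cos, ← Complex.ofReal_sin,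
    Real.cos_pi_div_two, Real.sin_pi_div_two]
  simp

lemma exp_neg_half : Complex.exp (Real.pi * Complex.I / 4 * (((-1:ℝ):ℂ) - 1)) = -I := by
  have : (Real.pi : ℂ) * I / 4 * (((-1:ℝ):ℂ) - 1) = (↑(-(Real.pi/2)) : ℂ) * I := by
    push_cast; ring
  rw [this, Complex.exp_mul_I, ← Complex.ofReal_cos, ← Complex.ofReal_sin]
  simp [Real.cos_pi_div_two, Real.sin_pi_div_two]

theorem z4_beta_condition (σ : ℝ) (hσ : σ = 1 ∨ σ = -1)
    (τ : ℂ) (hτ : τ = (σ : ℂ) * Complex.I)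
    (ε₁ : ℝ) (hε : ε₁ = 0 ∨ ε₁ = 1/2)
    (β : ℂ) (h4 : β ^ 4 = 1)
    (hD : Complex.exp (Real.pi * Complex.I * ε₁) * β
        = -(starRingEnd ℂ) τ * (starRingEnd ℂ) β) :
    ε₁ = 1/2 ∧
      (β = Complex.exp (Real.pi * Complex.I / 4 * (σ - 1)) ∨
        β = -Complex.exp (Real.pi * Complex.I / 4 * (σ - 1))) := by
  subst hτ
  rcases hε with hε | hε <;> subst hε <;>
    rcases hσ with hσ | hσ <;> subst hσ <;>
    rcases roots4 β h4 with hβ | hβ | hβ | hβ <;> subst hβ <;>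
    simp only [Complex.ofReal_zero, mul_zero, Complex.exp_zero, map_mul, map_neg,
      Complex.conj_I, Complex.conj_ofReal, map_one, exp_half] at hD ⊢ <;>
  first
    | (exfalso; revert hD; norm_num [Complex.ext_iff]; done)
    | (refine ⟨by trivial, ?_⟩;
       first
        | (left; norm_num [Complex.ext_iff, Complex.exp_zero]; done)
        | (right; norm_num [Complex.ext_iff, Complex.exp_zero]; done)
        | (rw [exp_neg_half]; norm_num))
end

section
/- Let σ ∈ {1, -1}, τ = e^{πiσ/3}, and ε₁ ∈ {0, 1/2}. If β₊ ∈ ℂ satisfies β₊⁶ = 1, e^{(2πi/3)ε₁}·β₊·(conj(τ) - 1) = conj(β₊)·conj(τ), and e^{(2πi/3)ε₁}·β₊·conj(τ) = conj(β₊), then ε₁ = 1/2 and β₊ = ±e^{(πi/6)(σ-1)}. -/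
/-!
Since `β` is a sixth root of unity, `conj β = β⁵ = β⁻¹`, so the second equivariance condition
says `β⁴ = e^{2πiε₁/3} · conj τ = e^{πi(2ε₁ - σ)/3}`. Cubing, `e^{πi(2ε₁ - σ)} = β¹² = 1`, so
`2ε₁ - σ` is an even integer; as `σ = ±1` is odd, `ε₁ ≠ 0`. With `ε₁ = 1/2` and
`c = e^{πi(σ - 1)/6}` we get `c² β⁴ = 1`, hence `β² = β⁶ c² = c²` and `β = ±c`.
-/

open Complex

theorem Complex.conj_eq_pow_of_pow_succ_eq_one {z : ℂ} {n : ℕ} (h : z ^ (n + 1) = 1) :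
    (starRingEnd ℂ) z = z ^ n := by
  rw [← Complex.inv_eq_conj (Complex.norm_eq_one_of_pow_eq_one h n.succ_ne_zero)]
  exact inv_eq_of_mul_eq_one_right (by rw [← pow_succ', h])

theorem Complex.pow_four_eq_of_mul_eq_conj {β w : ℂ} (h6 : β ^ 6 = 1)
    (h : w * β = (starRingEnd ℂ) β) : β ^ 4 = w := by
  have hβ0 : β ≠ 0 := by rintro rfl; norm_num at h6
  refine mul_left_cancel₀ hβ0 ?_
  rw [conj_eq_pow_of_pow_succ_eq_one h6] at h
  linear_combination -h

theorem Complex.exp_pi_mul_I_mul_eq_one_iff {x : ℝ} :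
    exp (Real.pi * I * x) = 1 ↔ ∃ n : ℤ, x = 2 * n := by
  have hπI : (Real.pi : ℂ) * I ≠ 0 := mul_ne_zero (ofReal_ne_zero.mpr Real.pi_ne_zero) I_ne_zero
  rw [Complex.exp_eq_one_iff]
  refine exists_congr fun n => ?_
  rw [show (n : ℂ) * (2 * Real.pi * I) = Real.pi * I * (2 * n) by ring, mul_right_inj' hπI]
  exact_mod_cast Iff.rfl

theorem eq_or_eq_neg_of_pow_six_eq_one {R : Type*} [CommRing R] [NoZeroDivisors R] {b c : R}
    (h6 : b ^ 6 = 1) (h : c ^ 2 * b ^ 4 = 1) : b = c ∨ b = -c :=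
  sq_eq_sq_iff_eq_or_eq_neg.mp (by linear_combination (-b ^ 2) * h + c ^ 2 * h6)

theorem z6_beta_condition_general (σ : ℝ) (hσ : σ = 1 ∨ σ = -1)
    (τ : ℂ) (hτ : τ = Complex.exp (Real.pi * Complex.I * σ / 3))
    (ε₁ : ℝ) (hε : ε₁ = 0 ∨ ε₁ = 1/2)
    (β : ℂ) (h6 : β ^ 6 = 1)
    (hD2 : Complex.exp (2 * Real.pi * Complex.I / 3 * ε₁) * β * (starRingEnd ℂ) τ
        = (starRingEnd ℂ) β) :
    ε₁ = 1/2 ∧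
      (β = Complex.exp (Real.pi * Complex.I / 6 * (σ - 1)) ∨
        β = -Complex.exp (Real.pi * Complex.I / 6 * (σ - 1))) := by
  have hw : exp (2 * Real.pi * I / 3 * ε₁) * (starRingEnd ℂ) τ
      = exp (Real.pi * I * (2 * ε₁ - σ) / 3) := by
    rw [hτ, ← exp_conj, ← exp_add]
    simp only [map_div₀, map_mul, conj_ofReal, conj_I, map_ofNat]
    ring_nf
  have hβ4 : β ^ 4 = exp (Real.pi * I * (2 * ε₁ - σ) / 3) :=
    hw ▸ pow_four_eq_of_mul_eq_conj h6 (by rw [← hD2]; ring)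
  obtain ⟨n, hn⟩ : ∃ n : ℤ, 2 * ε₁ - σ = 2 * n := by
    rw [← exp_pi_mul_I_mul_eq_one_iff]
    calc exp (Real.pi * I * ↑(2 * ε₁ - σ)) = (β ^ 4) ^ 3 := by
          rw [hβ4, ← exp_nat_mul]; push_cast; ring_nf
      _ = (β ^ 6) ^ 2 := by ring
      _ = 1 := by rw [h6, one_pow]
  have hε₁ : ε₁ = 1 / 2 := by
    rcases hε with rfl | rfl
    · have hσn : σ = 2 * ((-n : ℤ) : ℝ) := by push_cast; linarith
      rcases hσ with rfl | rfl <;> norm_cast at hσn <;> omega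
    · rfl
  subst hε₁
  refine ⟨rfl, eq_or_eq_neg_of_pow_six_eq_one h6 ?_⟩
  rw [hβ4, ← exp_nat_mul, ← exp_add]
  convert exp_zero using 2
  push_cast
  ring

theorem z6_beta_condition (σ : ℝ) (hσ : σ = 1 ∨ σ = -1)
    (τ : ℂ) (hτ : τ = Complex.exp (Real.pi * Complex.I * σ / 3))
    (ε₁ : ℝ) (hε : ε₁ = 0 ∨ ε₁ = 1/2)
    (β : ℂ) (h6 : β ^ 6 = 1)
    (hD1 : Complex.exp (2 * Real.pi * Complex.I / 3 * ε₁) * β * ((starRingEnd ℂ) τ - 1)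
        = (starRingEnd ℂ) β * (starRingEnd ℂ) τ)
    (hD2 : Complex.exp (2 * Real.pi * Complex.I / 3 * ε₁) * β * (starRingEnd ℂ) τ
        = (starRingEnd ℂ) β) :
    ε₁ = 1/2 ∧
      (β = Complex.exp (Real.pi * Complex.I / 6 * (σ - 1)) ∨
        β = -Complex.exp (Real.pi * Complex.I / 6 * (σ - 1))) :=
  z6_beta_condition_general σ hσ τ hτ ε₁ hε β h6 hD2
end

section
/- Let σ₊ be a nonzero element of the group algebra ℂ[ℤ²] (Laurent polynomials in V, W) and let ∂ be the derivation with ∂(V^a W^b) = (a + τ b)·V^a W^b where τ = e^{πi/3}. Suppose ∂σ₊ = −(ε₂ + ε₃ + τε₂ + conj(τ)ε₃)·σ₊ with ε₂, ε₃ ∈ {0, 1/2}. Then ε₂ = ε₃ = 0 and σ₊ is a scalar. -/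
/-! A monomial `V^a W^b` occurring in `σ` has `a + τ b = λ`. Since `τ + conj τ = 1`, the
eigenvalue is `λ = -(ε₂ + 2ε₃) + τ (ε₃ - ε₂)`, and since `1, τ` are `ℝ`-linearly independent this
forces `a = -(ε₂ + 2ε₃)` and `b = ε₃ - ε₂`. Integrality of `b` gives `ε₂ = ε₃`, then integrality
of `a = -3ε₂` gives `ε₂ = 0`; finally `λ = 0` leaves only the monomial `a = b = 0`. -/

open Complex

/-- Eigenvalue equation `∂σ = λ·σ` for the diagonal derivation
`∂(V^a W^b) = (a + τ b)·V^a W^b` on the group algebra ℂ[ℤ²],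
written coefficientwise. -/
def eigenEq (τ lam : ℂ) (σ : AddMonoidAlgebra ℂ (ℤ × ℤ)) : Prop :=
  ∀ p : ℤ × ℤ, ((p.1 : ℂ) + τ * (p.2 : ℂ)) * σ.coeff p = lam * σ.coeff p

theorem re_exp_pi_mul_I_div_three : (exp (Real.pi * I / 3)).re = 1 / 2 := by
  rw [show (Real.pi * I / 3 : ℂ) = ((Real.pi / 3 : ℝ) : ℂ) * I by push_cast; ring,
    exp_ofReal_mul_I_re, Real.cos_pi_div_three]

theorem im_exp_pi_mul_I_div_three : (exp (Real.pi * I / 3)).im = √3 / 2 := by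
  rw [show (Real.pi * I / 3 : ℂ) = ((Real.pi / 3 : ℝ) : ℂ) * I by push_cast; ring,
    exp_ofReal_mul_I_im, Real.sin_pi_div_three]

theorem conj_eq_one_sub_self_of_re_eq_half {τ : ℂ} (h : τ.re = 1 / 2) :
    (starRingEnd ℂ) τ = 1 - τ :=
  Complex.ext (by simp [h]; norm_num) (by simp)

theorem ofReal_add_mul_ofReal_inj {τ : ℂ} (hτ : τ.im ≠ 0) {a b x y : ℝ}
    (h : (a : ℂ) + τ * b = x + τ * y) : a = x ∧ b = y := by
  have him : τ.im * b = τ.im * y := by simpa using congrArg im h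
  have hb : b = y := mul_left_cancel₀ hτ him
  subst hb
  exact ⟨by simpa using congrArg re h, rfl⟩

theorem eigenEq.add_mul_eq_of_coeff_ne_zero {τ lam : ℂ} {σ : AddMonoidAlgebra ℂ (ℤ × ℤ)}
    (h : eigenEq τ lam σ) {p : ℤ × ℤ} (hp : σ.coeff p ≠ 0) : (p.1 : ℂ) + τ * p.2 = lam :=
  mul_right_cancel₀ hp (h p)

theorem eq_zero_of_intCast_eq_of_mem_zero_half {ε₂ ε₃ : ℝ}
    (hε₂ : ε₂ = 0 ∨ ε₂ = 1 / 2) (hε₃ : ε₃ = 0 ∨ ε₃ = 1 / 2) {m n : ℤ}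
    (hm : (m : ℝ) = -(ε₂ + 2 * ε₃)) (hn : (n : ℝ) = ε₃ - ε₂) : ε₂ = 0 ∧ ε₃ = 0 := by
  have h2m : ((2 * m : ℤ) : ℝ) = -(2 * ε₂ + 4 * ε₃) := by push_cast; linarith
  have h2n : ((2 * n : ℤ) : ℝ) = 2 * ε₃ - 2 * ε₂ := by push_cast; linarith
  rcases hε₂ with rfl | rfl <;> rcases hε₃ with rfl | rfl
  · exact ⟨rfl, rfl⟩
  all_goals norm_num at h2m h2n; norm_cast at h2m h2n; omega

theorem z3_spin_structure_restriction (ε₂ ε₃ : ℝ)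
    (hε₂ : ε₂ = 0 ∨ ε₂ = 1/2) (hε₃ : ε₃ = 0 ∨ ε₃ = 1/2)
    (τ : ℂ) (hτ : τ = Complex.exp (Real.pi * Complex.I / 3))
    (σp : AddMonoidAlgebra ℂ (ℤ × ℤ)) (hne : σp ≠ 0)
    (heq : eigenEq τ (-((ε₂ : ℂ) + (ε₃ : ℂ) + τ * ε₂ + (starRingEnd ℂ) τ * ε₃)) σp) :
    ε₂ = 0 ∧ ε₃ = 0 ∧ ∀ p : ℤ × ℤ, p ≠ 0 → σp.coeff p = 0 := by
  have hre : τ.re = 1 / 2 := hτ ▸ re_exp_pi_mul_I_div_three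
  have him : τ.im ≠ 0 := by rw [hτ, im_exp_pi_mul_I_div_three]; positivity
  have hlam : -((ε₂ : ℂ) + ε₃ + τ * ε₂ + (starRingEnd ℂ) τ * ε₃) =
      ((-(ε₂ + 2 * ε₃) : ℝ) : ℂ) + τ * ((ε₃ - ε₂ : ℝ) : ℂ) := by
    rw [conj_eq_one_sub_self_of_re_eq_half hre]; push_cast; ring
  rw [hlam] at heq
  have coords (p : ℤ × ℤ) (hp : σp.coeff p ≠ 0) :
      (p.1 : ℝ) = -(ε₂ + 2 * ε₃) ∧ (p.2 : ℝ) = ε₃ - ε₂ :=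
    ofReal_add_mul_ofReal_inj him (by exact_mod_cast heq.add_mul_eq_of_coeff_ne_zero hp)
  obtain ⟨p₀, hp₀⟩ := Finsupp.ne_iff.mp (AddMonoidAlgebra.coeff_eq_zero.not.mpr hne)
  obtain ⟨rfl, rfl⟩ :=
    eq_zero_of_intCast_eq_of_mem_zero_half hε₂ hε₃ (coords p₀ hp₀).1 (coords p₀ hp₀).2
  refine ⟨rfl, rfl, fun p hp => not_not.mp fun hc => hp ?_⟩
  obtain ⟨h₁, h₂⟩ := coords p hc
  norm_num at h₁ h₂
  exact Prod.ext h₁ h₂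
end

section
/- Let τ = i, ε₂, ε₃ ∈ {0, 1/2}, and let ∂ be the derivation on ℂ[ℤ²] with ∂(V^a W^b) = (a + i b)·V^a W^b. The equation ∂σ₊ = −(ε₂ + ε₃ + iε₂ − iε₃)·σ₊ has a nonzero solution σ₊ ∈ ℂ[ℤ²] if and only if ε₂ = ε₃ (i.e. ε₂ = ε₃ = 0 or ε₂ = ε₃ = 1/2). -/
/-!
The derivation is diagonal in the basis `V^a W^b` with eigenvalue `a + i b`, so its eigenvalues
are exactly the Gaussian integers. The imaginary part `ε₃ - ε₂` of the given value lies in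
`(-1, 1)`, so it is an integer only when it vanishes; conversely `-2ε` is `0` or `-1`.
-/

open Complex

/-- Eigenvalue equation `∂σ = λ·σ` for the diagonal derivation
`∂(V^a W^b) = (a + i b)·V^a W^b` on the group algebra ℂ[ℤ²],
written coefficientwise. -/
def eigenEqI (lam : ℂ) (σ : AddMonoidAlgebra ℂ (ℤ × ℤ)) : Prop :=
  ∀ p : ℤ × ℤ, ((p.1 : ℂ) + Complex.I * (p.2 : ℂ)) * σ.coeff p = lam * σ.coeff p

theorem eigenEqI_single (p : ℤ × ℤ) (c : ℂ) :
    eigenEqI ((p.1 : ℂ) + I * p.2) (AddMonoidAlgebra.single p c) := by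
  intro q
  by_cases hq : q = p
  · rw [hq]
  · rw [AddMonoidAlgebra.coeff_single, Finsupp.single_eq_of_ne hq, mul_zero, mul_zero]

theorem eigenEqI.eq_of_coeff_ne_zero {lam : ℂ} {σ : AddMonoidAlgebra ℂ (ℤ × ℤ)}
    (h : eigenEqI lam σ) {p : ℤ × ℤ} (hp : σ.coeff p ≠ 0) :
    (p.1 : ℂ) + I * p.2 = lam :=
  mul_right_cancel₀ hp (h p)

theorem exists_ne_zero_eigenEqI_iff (lam : ℂ) :
    (∃ σ : AddMonoidAlgebra ℂ (ℤ × ℤ), σ ≠ 0 ∧ eigenEqI lam σ) ↔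
      ∃ p : ℤ × ℤ, (p.1 : ℂ) + I * p.2 = lam := by
  constructor
  · rintro ⟨σ, hσ, heq⟩
    obtain ⟨p, hp⟩ : ∃ p, σ.coeff p ≠ 0 := by
      by_contra! h
      exact hσ (AddMonoidAlgebra.coeff_injective (Finsupp.ext h))
    exact ⟨p, heq.eq_of_coeff_ne_zero hp⟩
  · rintro ⟨p, rfl⟩
    exact ⟨AddMonoidAlgebra.single p 1, by simp, eigenEqI_single p 1⟩

theorem z4_spin_structure_restriction (ε₂ ε₃ : ℝ)
    (hε₂ : ε₂ = 0 ∨ ε₂ = 1/2) (hε₃ : ε₃ = 0 ∨ ε₃ = 1/2) :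
    (∃ σp : AddMonoidAlgebra ℂ (ℤ × ℤ), σp ≠ 0 ∧
      eigenEqI (-((ε₂ : ℂ) + (ε₃ : ℂ) + Complex.I * ε₂ - Complex.I * ε₃)) σp) ↔
    ε₂ = ε₃ := by
  rw [exists_ne_zero_eigenEqI_iff]
  constructor
  · rintro ⟨p, hp⟩
    have him : (p.2 : ℝ) = ε₃ - ε₂ := by simpa [sub_eq_add_neg] using congrArg im hp
    have hsmall : |(p.2 : ℝ)| < 1 := by
      rw [him]; rcases hε₂ with rfl | rfl <;> rcases hε₃ with rfl | rfl <;> norm_num [abs_lt]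
    have hzero : p.2 = 0 := Int.abs_lt_one_iff.mp (by exact_mod_cast hsmall)
    rw [hzero, Int.cast_zero] at him
    linarith
  · rintro rfl
    rcases hε₂ with rfl | rfl
    · exact ⟨(0, 0), by simp⟩
    · exact ⟨(-1, 0), by push_cast; ring⟩
end
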